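/- arXiv:2002.06654 — 2 statements merged into one kernel-verified Lean document; each statement's English description precedes it below -/
import Mathlib

section
/- Let Σ₁ and Σ₂ be positive definite d×d real matrices with Σ₂ − Σ₁ positive semidefinite (Loewner order). Then for every v > 0, the Gaussian measure with mean 0 and covariance Σ₁ of the centered Euclidean ball {x : ‖x‖ ≤ v} is at least the Gaussian measure with mean 0 and covariance Σ₂ of the same ball: γ_{0,Σ₁}({‖x‖ ≤ v}) ≥ γ_{0,Σ₂}({‖x‖ ≤ v}). (Special case of Anderson's theorem for convex symmetric sets.) -/
open MeasureTheory Matrix Set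
open scoped ENNReal

/-- The centered Gaussian measure on `ℝ^d` with covariance matrix `S`, defined via its
Lebesgue density `(2π)^{-d/2} det(S)^{-1/2} exp(-xᵀ S⁻¹ x / 2)`. -/
noncomputable def gaussMeasure {d : ℕ} (S : Matrix (Fin d) (Fin d) ℝ) :
    Measure (Fin d → ℝ) :=
  volume.withDensity fun x =>
    ENNReal.ofReal ((Real.sqrt ((2 * Real.pi) ^ d * S.det))⁻¹ *
      Real.exp (-(x ⬝ᵥ S⁻¹.mulVec x) / 2))

open scoped MatrixOrder in
lemma gauss_ball_eq {d : ℕ} (S : Matrix (Fin d) (Fin d) ℝ) (hS : S.PosDef) (v : ℝ) (hv : 0 ≤ v) :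
    gaussMeasure S {x | Real.sqrt (∑ i, x i ^ 2) ≤ v}
      = ∫⁻ z, Set.indicator {z : Fin d → ℝ | z ⬝ᵥ S.mulVec z ≤ v ^ 2}
          (fun z => ENNReal.ofReal ((Real.sqrt ((2 * Real.pi) ^ d))⁻¹ *
            Real.exp (-(z ⬝ᵥ z) / 2))) z := by
  classical
  set R := CFC.sqrt S with hRdef
  have hRsym : Rᵀ = R := (CFC.sqrt_nonneg S).posSemidef.1
  have hRR : R * R = S := CFC.sqrt_mul_sqrt_self S hS.posSemidef.nonneg
  have hdetS : 0 < S.det := hS.det_pos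
  have hdet2 : R.det * R.det = S.det := by rw [← det_mul, hRR]
  have hdetR : IsUnit R.det := by
    refine isUnit_iff_ne_zero.2 fun h => ?_
    rw [h, zero_mul] at hdet2; exact hdetS.ne hdet2
  have habs : |R.det| = Real.sqrt S.det := by
    rw [← hdet2, ← sq, Real.sqrt_sq_eq_abs]
  -- the quadratic forms
  have hform : ∀ z : Fin d → ℝ, (R *ᵥ z) ⬝ᵥ (R *ᵥ z) = z ⬝ᵥ S *ᵥ z := by
    intro z
    have hSsym : Sᵀ = S := hS.1
    rw [dotProduct_mulVec, ← mulVec_transpose, hRsym, mulVec_mulVec, hRR, dotProduct_comm,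
      dotProduct_mulVec, ← mulVec_transpose, hSsym]
  have hinv : ∀ z : Fin d → ℝ, (R *ᵥ z) ⬝ᵥ (S⁻¹ *ᵥ (R *ᵥ z)) = z ⬝ᵥ z := by
    intro z
    have hSinv : S⁻¹ = R⁻¹ * R⁻¹ := by rw [← hRR, Matrix.mul_inv_rev]
    have hRSR : R * (S⁻¹ * R) = 1 := by
      rw [hSinv, Matrix.mul_assoc, Matrix.nonsing_inv_mul R hdetR, Matrix.mul_one,
        Matrix.mul_nonsing_inv R hdetR]
    have hSsym : Sᵀ = S := hS.1
    have hSinvSym : S⁻¹ᵀ = S⁻¹ := by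
      rw [Matrix.transpose_nonsing_inv, hSsym]
    rw [dotProduct_mulVec, ← mulVec_transpose, hSinvSym, mulVec_mulVec, dotProduct_mulVec,
      ← mulVec_transpose, hRsym, mulVec_mulVec, ← Matrix.mul_assoc, Matrix.mul_assoc R S⁻¹ R,
      hRSR, Matrix.one_mulVec]
  -- measurability facts
  have hE : MeasurableSet {x : Fin d → ℝ | Real.sqrt (∑ i, x i ^ 2) ≤ v} := by
    apply measurableSet_le _ measurable_const
    exact (Real.continuous_sqrt.comp (by continuity)).measurable
  have hfmeas : Measurable (fun x : Fin d → ℝ =>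
      ENNReal.ofReal ((Real.sqrt ((2 * Real.pi) ^ d * S.det))⁻¹ *
        Real.exp (-(x ⬝ᵥ S⁻¹ *ᵥ x) / 2))) := by
    apply ENNReal.measurable_ofReal.comp
    apply Measurable.const_mul
    apply Real.measurable_exp.comp
    apply Measurable.div_const
    apply Measurable.neg
    simp only [dotProduct, Matrix.mulVec]
    exact Finset.measurable_sum _ fun i _ => ((measurable_pi_apply i).mul
      (Finset.measurable_sum _ fun j _ => (measurable_const.mul (measurable_pi_apply j))))
  have hT : Measurable (Matrix.toLin' R) :=
    (LinearMap.continuous_on_pi _).measurable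
  -- change of variables
  have hmap : Measure.map (Matrix.toLin' R) volume
      = ENNReal.ofReal |R.det⁻¹| • volume :=
    Real.map_matrix_volume_pi_eq_smul_volume_pi hdetR.ne_zero
  have habsne : |R.det| ≠ 0 := abs_ne_zero.2 hdetR.ne_zero
  have hvol : (ENNReal.ofReal |R.det|) • Measure.map (Matrix.toLin' R) volume = volume := by
    rw [hmap, abs_inv, smul_smul, ← ENNReal.ofReal_mul (abs_nonneg _),
      mul_inv_cancel₀ habsne, ENNReal.ofReal_one, one_smul]
  rw [gaussMeasure, withDensity_apply _ hE, ← lintegral_indicator hE]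
  conv_lhs => rw [← hvol, lintegral_smul_measure, lintegral_map ((hfmeas.indicator hE)) hT,
    smul_eq_mul, ← lintegral_const_mul' _ _ ENNReal.ofReal_ne_top]
  congr 1
  funext z
  rw [Matrix.toLin'_apply]
  have hsum : ∑ i, (R *ᵥ z) i ^ 2 = (R *ᵥ z) ⬝ᵥ (R *ᵥ z) := by
    simp [dotProduct, sq]
  by_cases hz : z ⬝ᵥ S *ᵥ z ≤ v ^ 2
  · have hmem : R *ᵥ z ∈ {x : Fin d → ℝ | Real.sqrt (∑ i, x i ^ 2) ≤ v} := by
      simp only [Set.mem_setOf_eq, hsum, hform z]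
      exact Real.sqrt_le_iff.2 ⟨hv, hz⟩
    rw [Set.indicator_of_mem hmem, Set.indicator_of_mem (show z ∈ {z : Fin d → ℝ | z ⬝ᵥ S *ᵥ z ≤ v ^ 2} from hz), hinv z,
      ← ENNReal.ofReal_mul (abs_nonneg _)]
    congr 1
    rw [← mul_assoc]
    congr 1
    rw [Real.sqrt_mul (by positivity) S.det, ← habs, mul_inv, ← mul_assoc,
      mul_comm |R.det|, mul_assoc, mul_inv_cancel₀ habsne, mul_one]
  · have hmem : R *ᵥ z ∉ {x : Fin d → ℝ | Real.sqrt (∑ i, x i ^ 2) ≤ v} := by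
      simp only [Set.mem_setOf_eq, hsum, hform z]
      intro hc
      exact hz ((Real.sqrt_le_iff.1 hc).2)
    rw [Set.indicator_of_notMem hmem, Set.indicator_of_notMem (show z ∉ {z : Fin d → ℝ | z ⬝ᵥ S *ᵥ z ≤ v ^ 2} from hz), mul_zero]


/-- Anderson's theorem, special case: if `S₂ - S₁ ⪰ 0` (Loewner order), then the centered
Gaussian measure with covariance `S₁` assigns at least as much mass to any centered Euclidean
ball as the one with covariance `S₂`. -/
theorem anderson_gaussian_ball
    {d : ℕ} (S₁ S₂ : Matrix (Fin d) (Fin d) ℝ)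
    (h₁ : S₁.PosDef) (h₂ : S₂.PosDef) (hle : (S₂ - S₁).PosSemidef) :
    ∀ v : ℝ, 0 < v →
      gaussMeasure S₂ {x | Real.sqrt (∑ i, x i ^ 2) ≤ v} ≤
        gaussMeasure S₁ {x | Real.sqrt (∑ i, x i ^ 2) ≤ v} := by
  intro v hv
  rw [gauss_ball_eq S₁ h₁ v hv.le, gauss_ball_eq S₂ h₂ v hv.le]
  apply lintegral_mono
  have hsub : {z : Fin d → ℝ | z ⬝ᵥ S₂ *ᵥ z ≤ v ^ 2} ⊆ {z : Fin d → ℝ | z ⬝ᵥ S₁ *ᵥ z ≤ v ^ 2} := by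
    intro z hz
    simp only [Set.mem_setOf_eq] at hz ⊢
    have h0 := hle.dotProduct_mulVec_nonneg z
    simp only [star_trivial, Matrix.sub_mulVec, dotProduct_sub] at h0
    linarith
  exact Set.indicator_le_indicator_of_subset hsub (fun a => zero_le)
end

section
/- Under a completely randomized design with N units, n₁ treated and n₀ = N − n₁ controls, the variance of the difference-in-means estimator τ̂ equals S₁²/n₁ + S₀²/n₀ − S_τ²/N, where S_z² = (N−1)^{−1} Σ_i (y_i(z) − ȳ(z))² for z ∈ {0,1} and S_τ² = (N−1)^{−1} Σ_i (τ_i − τ̄)² with τ_i = y_i(1) − y_i(0). In particular, Var(τ̂) ≤ S₁²/n₁ + S₀²/n₀, with equality iff the unit-level treatment effects are constant. -/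
open Finset

/-- The difference-in-means estimator for the allocation with treated set `S`. -/
noncomputable def tauHat (N n₁ : ℕ) (y1 y0 : Fin N → ℝ) (S : Finset (Fin N)) : ℝ :=
  (n₁ : ℝ)⁻¹ * ∑ i ∈ S, y1 i - ((N - n₁ : ℕ) : ℝ)⁻¹ * ∑ i ∈ Sᶜ, y0 i

/-- Finite-population variance `S² = (N-1)⁻¹ Σᵢ (yᵢ - ȳ)²`. -/
noncomputable def popVar (N : ℕ) (y : Fin N → ℝ) : ℝ :=
  ((N : ℝ) - 1)⁻¹ * ∑ i, (y i - (N : ℝ)⁻¹ * ∑ j, y j) ^ 2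


lemma countA (N k : ℕ) (hk : 1 ≤ k) (i : Fin N) :
    (((univ : Finset (Fin N)).powersetCard k).filter (fun S => i ∈ S)).card
      = (N - 1).choose (k - 1) := by
  have h : (((univ : Finset (Fin N)).powersetCard k).filter (fun S => i ∈ S)).card
      = (((univ : Finset (Fin N)).erase i).powersetCard (k-1)).card := by
    refine Finset.card_bij' (fun S _ => S.erase i) (fun T _ => insert i T) ?hi ?hj ?left ?right
    case hi =>
      intro S hS
      simp only [mem_filter, mem_powersetCard_univ] at hS
      rw [mem_powersetCard]
      exact ⟨by rw [subset_erase]; exact ⟨subset_univ _, notMem_erase _ _⟩,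
        by rw [card_erase_of_mem hS.2, hS.1]⟩
    case hj =>
      intro T hT
      rw [mem_powersetCard, subset_erase] at hT
      simp only [mem_filter, mem_powersetCard_univ]
      refine ⟨?_, mem_insert_self _ _⟩
      rw [card_insert_of_notMem hT.1.2, hT.2]; omega
    case left =>
      intro S hS
      simp only [mem_filter] at hS; exact insert_erase hS.2
    case right =>
      intro T hT
      rw [mem_powersetCard, subset_erase] at hT; exact erase_insert hT.1.2
  rw [h, card_powersetCard, card_erase_of_mem (mem_univ i), card_univ, Fintype.card_fin]

lemma countB (N k : ℕ) (hk : 2 ≤ k) (i j : Fin N) (hij : i ≠ j) :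
    (((univ : Finset (Fin N)).powersetCard k).filter (fun S => i ∈ S ∧ j ∈ S)).card
      = (N - 2).choose (k - 2) := by
  have h : (((univ : Finset (Fin N)).powersetCard k).filter (fun S => i ∈ S ∧ j ∈ S)).card
      = ((((univ : Finset (Fin N)).erase i).erase j).powersetCard (k-2)).card := by
    refine Finset.card_bij' (fun S _ => (S.erase i).erase j)
      (fun T _ => insert j (insert i T)) ?hi ?hj ?left ?right
    case hi =>
      intro S hS
      simp only [mem_filter, mem_powersetCard_univ] at hS
      rw [mem_powersetCard]
      constructor
      · rw [subset_erase]
        refine ⟨?_, notMem_erase _ _⟩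
        intro x hx
        exact mem_erase.2 ⟨(mem_erase.1 (mem_of_mem_erase hx)).1, mem_univ x⟩
      · rw [card_erase_of_mem (mem_erase.2 ⟨hij.symm, hS.2.2⟩), card_erase_of_mem hS.2.1, hS.1]
        omega
    case hj =>
      intro T hT
      rw [mem_powersetCard, subset_erase] at hT
      obtain ⟨⟨hT1, hjT⟩, hcard⟩ := hT
      rw [subset_erase] at hT1
      simp only [mem_filter, mem_powersetCard_univ]
      have hij' : i ∉ insert j T := by
        simp only [mem_insert]; push_neg; exact ⟨hij, hT1.2⟩
      have hjiT : j ∉ insert i T := by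
        simp only [mem_insert]; push_neg; exact ⟨hij.symm, hjT⟩
      refine ⟨?_, mem_insert_of_mem (mem_insert_self _ _), mem_insert_self _ _⟩
      rw [card_insert_of_notMem hjiT, card_insert_of_notMem hT1.2, hcard]
      omega
    case left =>
      intro S hS
      simp only [mem_filter] at hS
      show insert j (insert i ((S.erase i).erase j)) = S
      rw [Finset.erase_right_comm, insert_erase (mem_erase.2 ⟨hij, hS.2.1⟩), insert_erase hS.2.2]
    case right =>
      intro T hT
      rw [mem_powersetCard, subset_erase] at hT
      obtain ⟨⟨hT1, hjT⟩, hcard⟩ := hT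
      rw [subset_erase] at hT1
      show ((insert j (insert i T)).erase i).erase j = T
      rw [Finset.erase_right_comm, erase_insert, erase_insert hT1.2]
      simp only [mem_insert]; push_neg; exact ⟨hij.symm, hjT⟩
  rw [h, card_powersetCard, card_erase_of_mem, card_erase_of_mem (mem_univ i), card_univ,
    Fintype.card_fin]
  · congr 1
  · exact mem_erase.2 ⟨hij.symm, mem_univ j⟩

section AuxSums
variable {N : ℕ}

lemma sum_subsets (A : Finset (Finset (Fin N))) (f : Fin N → ℝ) :
    ∑ S ∈ A, ∑ i ∈ S, f i
      = ∑ i, ((A.filter (fun S => i ∈ S)).card : ℝ) * f i := by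
  calc ∑ S ∈ A, ∑ i ∈ S, f i
      = ∑ S ∈ A, ∑ i : Fin N, if i ∈ S then f i else 0 := by
        refine sum_congr rfl fun S _ => ?_
        rw [Finset.sum_ite_mem, univ_inter]
    _ = ∑ i : Fin N, ∑ S ∈ A, if i ∈ S then f i else 0 := Finset.sum_comm
    _ = _ := by
        refine sum_congr rfl fun i _ => ?_
        rw [← Finset.sum_filter, Finset.sum_const, nsmul_eq_mul]

lemma sum_subsets_sq (A : Finset (Finset (Fin N))) (f : Fin N → ℝ) :
    ∑ S ∈ A, (∑ i ∈ S, f i) ^ 2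
      = ∑ i, ∑ j, ((A.filter (fun S => i ∈ S ∧ j ∈ S)).card : ℝ) * (f i * f j) := by
  calc ∑ S ∈ A, (∑ i ∈ S, f i) ^ 2
      = ∑ S ∈ A, ∑ i : Fin N, ∑ j : Fin N,
          if i ∈ S ∧ j ∈ S then f i * f j else 0 := by
        refine sum_congr rfl fun S _ => ?_
        rw [sq, Finset.sum_mul_sum]
        have h1 : ∀ g : Fin N → ℝ, ∑ i ∈ S, g i = ∑ i : Fin N, if i ∈ S then g i else 0 :=
          fun g => by rw [Finset.sum_ite_mem, univ_inter]
        rw [show (∑ i ∈ S, ∑ j ∈ S, f i * f j)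
            = ∑ i ∈ S, ∑ j : Fin N, if j ∈ S then f i * f j else 0 from
          sum_congr rfl fun i _ => h1 _, h1]
        refine sum_congr rfl fun i _ => ?_
        split_ifs with h
        · exact sum_congr rfl fun j _ => by simp [h]
        · exact (sum_eq_zero fun j _ => by simp [h]).symm
    _ = ∑ i : Fin N, ∑ j : Fin N, ∑ S ∈ A,
          if i ∈ S ∧ j ∈ S then f i * f j else 0 := by
        rw [Finset.sum_comm]
        exact sum_congr rfl fun i _ => Finset.sum_comm
    _ = _ := by
        refine sum_congr rfl fun i _ => sum_congr rfl fun j _ => ?_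
        rw [← Finset.sum_filter, Finset.sum_const, nsmul_eq_mul]

end AuxSums

lemma countA_real (N k : ℕ) (h0 : 0 < k) (hk : k < N) (i : Fin N) :
    ((((univ : Finset (Fin N)).powersetCard k).filter (fun S => i ∈ S)).card : ℝ)
      = (k : ℝ) * (N.choose k : ℝ) / N := by
  have hN : 0 < N := lt_of_le_of_lt (Nat.zero_le _) hk
  have hnat : N * (N - 1).choose (k - 1) = k * N.choose k := by
    obtain ⟨a, rfl⟩ : ∃ a, N = a + 1 := ⟨N - 1, by omega⟩
    obtain ⟨b, rfl⟩ : ∃ b, k = b + 1 := ⟨k - 1, by omega⟩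
    simpa [Nat.mul_comm] using Nat.add_one_mul_choose_eq a b
  rw [countA N k h0 i, eq_div_iff (by positivity : (N:ℝ) ≠ 0)]
  have h2 : ((N - 1).choose (k - 1) * N : ℕ) = (k * N.choose k : ℕ) := by
    rw [mul_comm]; exact hnat
  exact_mod_cast h2

lemma countB_real (N k : ℕ) (h0 : 0 < k) (hk : k < N) (i j : Fin N) (hij : i ≠ j) :
    ((((univ : Finset (Fin N)).powersetCard k).filter (fun S => i ∈ S ∧ j ∈ S)).card : ℝ)
      = (k : ℝ) * ((k : ℝ) - 1) * (N.choose k : ℝ) / ((N : ℝ) * ((N : ℝ) - 1)) := by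
  have hN2 : 2 ≤ N := by omega
  have hNR : (0:ℝ) < (N : ℝ) := by positivity
  have hNR1 : (0:ℝ) < (N : ℝ) - 1 := by
    have : (2:ℝ) ≤ (N:ℝ) := by exact_mod_cast hN2
    linarith
  rcases Nat.lt_or_ge k 2 with hk2 | hk2
  · -- k = 1
    have hk1 : k = 1 := by omega
    subst hk1
    have hempty : ((univ : Finset (Fin N)).powersetCard 1).filter
        (fun S => i ∈ S ∧ j ∈ S) = ∅ := by
      rw [filter_eq_empty_iff]
      intro S hS
      rw [mem_powersetCard_univ] at hS
      rintro ⟨hiS, hjS⟩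
      exact hij (by
        have := Finset.card_le_one.1 (le_of_eq hS)
        exact this i hiS j hjS)
    rw [hempty]
    simp
  · have hnat : N * (N - 1) * (N - 2).choose (k - 2) = k * (k - 1) * N.choose k := by
      obtain ⟨a, rfl⟩ : ∃ a, N = a + 2 := ⟨N - 2, by omega⟩
      obtain ⟨b, rfl⟩ : ∃ b, k = b + 2 := ⟨k - 2, by omega⟩
      have h1 : (a + 1) * a.choose b = (a + 1).choose (b + 1) * (b + 1) :=
        Nat.add_one_mul_choose_eq a b
      have h2 : (a + 2) * (a + 1).choose (b + 1) = (a + 2).choose (b + 2) * (b + 2) :=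
        Nat.add_one_mul_choose_eq (a + 1) (b + 1)
      have e1 : a + 2 - 1 = a + 1 := by omega
      have e2 : a + 2 - 2 = a := by omega
      have e3 : b + 2 - 2 = b := by omega
      have e4 : b + 2 - 1 = b + 1 := by omega
      rw [e1, e2, e3, e4]
      calc (a + 2) * (a + 1) * a.choose b
          = (a + 2) * ((a + 1) * a.choose b) := by ring
        _ = (a + 2) * ((a + 1).choose (b + 1) * (b + 1)) := by rw [h1]
        _ = ((a + 2) * (a + 1).choose (b + 1)) * (b + 1) := by ring
        _ = ((a + 2).choose (b + 2) * (b + 2)) * (b + 1) := by rw [h2]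
        _ = (b + 2) * (b + 1) * (a + 2).choose (b + 2) := by ring
    rw [countB N k hk2 i j hij, eq_div_iff (by positivity)]
    have hc : ((N - 2).choose (k - 2) : ℝ) * ((N : ℝ) * ((N:ℝ) - 1))
        = ((N - 2).choose (k - 2) * (N * (N - 1)) : ℕ) := by
      push_cast [Nat.cast_sub (by omega : 1 ≤ N)]
      ring
    rw [hc]
    have hk1R : ((k:ℝ) - 1) = ((k - 1 : ℕ) : ℝ) := by
      rw [Nat.cast_sub (by omega : 1 ≤ k)]; push_cast; ring
    rw [hk1R, ← Nat.cast_mul, ← Nat.cast_mul]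
    congr 1
    rw [mul_comm]
    exact hnat


lemma srs_var (N k : ℕ) (h0 : 0 < k) (hk : k < N) (w : Fin N → ℝ) :
    ((N.choose k : ℝ))⁻¹ * ∑ S ∈ (univ : Finset (Fin N)).powersetCard k,
        (∑ i ∈ S, w i - (k : ℝ) / N * ∑ i, w i) ^ 2
      = (k : ℝ) * ((N : ℝ) - k) / ((N : ℝ) * ((N : ℝ) - 1))
          * (∑ i, (w i) ^ 2 - (∑ i, w i) ^ 2 / N) := by
  have hN : 0 < N := lt_of_le_of_lt (Nat.zero_le _) hk
  have hNR : (0:ℝ) < (N : ℝ) := by exact_mod_cast hN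
  have hNR1 : (0:ℝ) < (N : ℝ) - 1 := by
    have : (2:ℝ) ≤ (N:ℝ) := by exact_mod_cast (by omega : 2 ≤ N)
    linarith
  have hM : (0:ℝ) < (N.choose k : ℝ) := by
    exact_mod_cast Nat.choose_pos hk.le
  set 𝒜 := (univ : Finset (Fin N)).powersetCard k with h𝒜
  set P := ∑ i, w i with hP
  set Q := ∑ i, (w i) ^ 2 with hQ
  set M := (N.choose k : ℝ) with hMdef
  set c1 := (k : ℝ) * M / N with hc1
  set c2 := (k : ℝ) * ((k:ℝ) - 1) * M / ((N:ℝ) * ((N:ℝ) - 1)) with hc2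
  have hsum1 : ∑ S ∈ 𝒜, ∑ i ∈ S, w i = c1 * P := by
    rw [sum_subsets]
    calc ∑ i, ((𝒜.filter (fun S => i ∈ S)).card : ℝ) * w i
        = ∑ i, c1 * w i :=
          sum_congr rfl fun i _ => by rw [countA_real N k h0 hk i]
      _ = c1 * P := by rw [← mul_sum]
  have hsum2 : ∑ S ∈ 𝒜, (∑ i ∈ S, w i) ^ 2 = c2 * (P * P - Q) + c1 * Q := by
    rw [sum_subsets_sq]
    have hi : ∀ i : Fin N,
        ∑ j, ((𝒜.filter (fun S => i ∈ S ∧ j ∈ S)).card : ℝ) * (w i * w j)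
          = c2 * (w i * (P - w i)) + c1 * (w i * w i) := by
      intro i
      rw [← Finset.sum_erase_add univ _ (mem_univ i)]
      congr 1
      · calc ∑ j ∈ univ.erase i,
              ((𝒜.filter (fun S => i ∈ S ∧ j ∈ S)).card : ℝ) * (w i * w j)
            = ∑ j ∈ univ.erase i, c2 * (w i * w j) :=
              sum_congr rfl fun j hj => by
                rw [countB_real N k h0 hk i j (Ne.symm (mem_erase.1 hj).1)]
          _ = c2 * (w i * (P - w i)) := by
              have he : ∑ j ∈ univ.erase i, w j = P - w i := by
                have h := Finset.sum_erase_add univ w (mem_univ i)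
                rw [← hP] at h; linarith
              rw [← mul_sum, ← mul_sum, he]
      · simp only [and_self]
        rw [countA_real N k h0 hk i]
    calc ∑ i, ∑ j, ((𝒜.filter (fun S => i ∈ S ∧ j ∈ S)).card : ℝ) * (w i * w j)
        = ∑ i, (c2 * (w i * (P - w i)) + c1 * (w i * w i)) :=
          sum_congr rfl fun i _ => hi i
      _ = c2 * (P * P - Q) + c1 * Q := by
          rw [sum_add_distrib, ← mul_sum, ← mul_sum]
          congr 2
          · have : ∀ i : Fin N, w i * (P - w i) = P * w i - (w i) ^ 2 := fun i => by ring
            rw [sum_congr rfl fun i _ => this i, sum_sub_distrib, ← mul_sum, ← hP, ← hQ]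
          · exact sum_congr rfl fun i _ => (sq (w i)) ▸ by ring
  have hcard : ((𝒜.card : ℕ) : ℝ) = M := by
    rw [h𝒜, card_powersetCard, card_univ, Fintype.card_fin]
  have expand : ∑ S ∈ 𝒜, (∑ i ∈ S, w i - (k : ℝ) / N * P) ^ 2
      = ∑ S ∈ 𝒜, ((∑ i ∈ S, w i) ^ 2 - 2 * ((k:ℝ)/N*P) * (∑ i ∈ S, w i)
          + ((k:ℝ)/N*P)^2) :=
    sum_congr rfl fun S _ => by ring
  rw [expand]
  rw [sum_add_distrib, sum_sub_distrib, ← mul_sum, hsum1, hsum2, sum_const, nsmul_eq_mul, hcard]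
  rw [hc1, hc2]
  field_simp
  ring

lemma sum_sq_dev (N : ℕ) (hN : 0 < N) (y : Fin N → ℝ) :
    ∑ i, (y i - (N:ℝ)⁻¹ * ∑ j, y j) ^ 2 = ∑ i, (y i)^2 - (∑ i, y i)^2 / N := by
  have hNR : (0:ℝ) < (N : ℝ) := by exact_mod_cast hN
  have h : ∀ i : Fin N, (y i - (N:ℝ)⁻¹ * ∑ j, y j)^2
      = (y i)^2 - (2*(N:ℝ)⁻¹* ∑ j, y j)*(y i) + ((N:ℝ)⁻¹* ∑ j, y j)^2 := fun i => by ring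
  rw [sum_congr rfl fun i _ => h i, sum_add_distrib, sum_sub_distrib, ← mul_sum,
    sum_const, card_univ, Fintype.card_fin, nsmul_eq_mul]
  field_simp
  ring

lemma tauHat_bridge (N n₁ : ℕ) (h0 : 0 < n₁) (hN : n₁ < N) (y1 y0 : Fin N → ℝ) (S : Finset (Fin N)) :
    tauHat N n₁ y1 y0 S - (N : ℝ)⁻¹ * ∑ i, (y1 i - y0 i)
      = ∑ i ∈ S, (y1 i / n₁ + y0 i / ((N:ℝ) - n₁))
        - (n₁ : ℝ) / N * ∑ i, (y1 i / n₁ + y0 i / ((N:ℝ) - n₁)) := by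
  have hn₀ : ((N - n₁ : ℕ) : ℝ) = (N:ℝ) - n₁ := by
    rw [Nat.cast_sub hN.le]
  have hn₁R : (0:ℝ) < (n₁:ℝ) := by exact_mod_cast h0
  have hn₀R : (0:ℝ) < (N:ℝ) - (n₁:ℝ) := by
    have : (n₁:ℝ) < N := by exact_mod_cast hN
    linarith
  have hNR : (0:ℝ) < (N:ℝ) := by exact_mod_cast h0.trans hN
  have hcompl : ∑ i ∈ Sᶜ, y0 i = ∑ i, y0 i - ∑ i ∈ S, y0 i := by
    have := Finset.sum_add_sum_compl S y0
    linarith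
  have hsub : ∑ i, (y1 i - y0 i) = ∑ i, y1 i - ∑ i, y0 i := sum_sub_distrib _ _
  have h1 : ∑ i ∈ S, (y1 i / n₁ + y0 i / ((N:ℝ) - n₁))
      = (∑ i ∈ S, y1 i) / n₁ + (∑ i ∈ S, y0 i) / ((N:ℝ) - n₁) := by
    rw [sum_add_distrib, sum_div, sum_div]
  have h2 : ∑ i : Fin N, (y1 i / n₁ + y0 i / ((N:ℝ) - n₁))
      = (∑ i, y1 i) / n₁ + (∑ i, y0 i) / ((N:ℝ) - n₁) := by
    rw [sum_add_distrib, sum_div, sum_div]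
  rw [tauHat, hn₀, hcompl, hsub, h1, h2]
  field_simp
  ring

lemma rhs_algebra(N n₁ : ℕ) (h0 : 0 < n₁) (hN : n₁ < N) (y1 y0 : Fin N → ℝ) :
    (n₁ : ℝ) * ((N : ℝ) - n₁) / ((N : ℝ) * ((N : ℝ) - 1))
        * (∑ i, (y1 i / n₁ + y0 i / ((N:ℝ) - n₁))^2
           - (∑ i, (y1 i / n₁ + y0 i / ((N:ℝ) - n₁)))^2 / N)
      = popVar N y1 / n₁ + popVar N y0 / ((N - n₁ : ℕ) : ℝ)
        - popVar N (y1 - y0) / N := by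
  have hn₀ : ((N - n₁ : ℕ) : ℝ) = (N:ℝ) - n₁ := by rw [Nat.cast_sub hN.le]
  have hn₁R : (0:ℝ) < (n₁:ℝ) := by exact_mod_cast h0
  have hNR : (0:ℝ) < (N:ℝ) := by exact_mod_cast h0.trans hN
  have hn₀R : (0:ℝ) < (N:ℝ) - (n₁:ℝ) := by
    have : (n₁:ℝ) < N := by exact_mod_cast hN
    linarith
  have hNR1 : (0:ℝ) < (N:ℝ) - 1 := by
    have : (1:ℝ) ≤ (n₁:ℝ) := by exact_mod_cast h0
    linarith
  have hNpos : 0 < N := h0.trans hN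
  have hQ : ∑ i, (y1 i / n₁ + y0 i / ((N:ℝ) - n₁))^2
      = (1/(n₁:ℝ)^2) * ∑ i, (y1 i)^2
        + (2/((n₁:ℝ)*((N:ℝ)-n₁))) * ∑ i, y1 i * y0 i
        + (1/((N:ℝ)-n₁)^2) * ∑ i, (y0 i)^2 := by
    rw [mul_sum, mul_sum, mul_sum, ← sum_add_distrib, ← sum_add_distrib]
    refine sum_congr rfl fun i _ => ?_
    field_simp
    ring
  have hP : ∑ i, (y1 i / n₁ + y0 i / ((N:ℝ) - n₁))
      = (∑ i, y1 i) / n₁ + (∑ i, y0 i) / ((N:ℝ) - n₁) := by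
    rw [sum_add_distrib, sum_div, sum_div]
  have ht2 : ∑ i, ((y1 - y0) i)^2
      = ∑ i, (y1 i)^2 - 2 * ∑ i, y1 i * y0 i + ∑ i, (y0 i)^2 := by
    have h : ∀ i : Fin N, ((y1 - y0) i)^2 = (y1 i)^2 - 2*(y1 i * y0 i) + (y0 i)^2 := fun i => by
      simp only [Pi.sub_apply]; ring
    rw [sum_congr rfl fun i _ => h i, sum_add_distrib, sum_sub_distrib, ← mul_sum]
  have ht1 : ∑ i, (y1 - y0) i = ∑ i, y1 i - ∑ i, y0 i := by
    simp [Pi.sub_apply, sum_sub_distrib]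
  rw [popVar, popVar, popVar, sum_sq_dev N hNpos, sum_sq_dev N hNpos, sum_sq_dev N hNpos,
    hQ, hP, ht2, ht1, hn₀]
  field_simp
  ring

/-- Neyman's variance decomposition: under complete randomization,
`Var(τ̂) = S₁²/n₁ + S₀²/n₀ - S_τ²/N`; in particular `Var(τ̂) ≤ S₁²/n₁ + S₀²/n₀`,
with equality iff the unit-level treatment effects are constant. -/
theorem neyman_variance_decomposition
    (N n₁ : ℕ) (h0 : 0 < n₁) (hN : n₁ < N) (y1 y0 : Fin N → ℝ) :
    ((Finset.univ.filter fun S : Finset (Fin N) => S.card = n₁).card : ℝ)⁻¹ *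
          ∑ S ∈ Finset.univ.filter fun S : Finset (Fin N) => S.card = n₁,
            (tauHat N n₁ y1 y0 S - (N : ℝ)⁻¹ * ∑ i, (y1 i - y0 i)) ^ 2 =
        popVar N y1 / n₁ + popVar N y0 / (N - n₁ : ℕ) - popVar N (y1 - y0) / N ∧
      ((Finset.univ.filter fun S : Finset (Fin N) => S.card = n₁).card : ℝ)⁻¹ *
          ∑ S ∈ Finset.univ.filter fun S : Finset (Fin N) => S.card = n₁,
            (tauHat N n₁ y1 y0 S - (N : ℝ)⁻¹ * ∑ i, (y1 i - y0 i)) ^ 2 ≤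
        popVar N y1 / n₁ + popVar N y0 / (N - n₁ : ℕ) ∧
      (((Finset.univ.filter fun S : Finset (Fin N) => S.card = n₁).card : ℝ)⁻¹ *
          ∑ S ∈ Finset.univ.filter fun S : Finset (Fin N) => S.card = n₁,
            (tauHat N n₁ y1 y0 S - (N : ℝ)⁻¹ * ∑ i, (y1 i - y0 i)) ^ 2 =
        popVar N y1 / n₁ + popVar N y0 / (N - n₁ : ℕ) ↔
        ∀ i j : Fin N, y1 i - y0 i = y1 j - y0 j) := by
  have hNR : (0:ℝ) < (N:ℝ) := by exact_mod_cast h0.trans hN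
  have hNR1 : (0:ℝ) < (N:ℝ) - 1 := by
    have : (2:ℝ) ≤ (N:ℝ) := by exact_mod_cast (by omega : 2 ≤ N)
    linarith
  have filterEq : (Finset.univ.filter fun S : Finset (Fin N) => S.card = n₁)
      = (univ : Finset (Fin N)).powersetCard n₁ := by
    rw [powersetCard_eq_filter, powerset_univ]
  have hVar : ((Finset.univ.filter fun S : Finset (Fin N) => S.card = n₁).card : ℝ)⁻¹ *
          ∑ S ∈ Finset.univ.filter fun S : Finset (Fin N) => S.card = n₁,
            (tauHat N n₁ y1 y0 S - (N : ℝ)⁻¹ * ∑ i, (y1 i - y0 i)) ^ 2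
      = popVar N y1 / n₁ + popVar N y0 / ((N - n₁ : ℕ) : ℝ) - popVar N (y1 - y0) / N := by
    calc ((Finset.univ.filter fun S : Finset (Fin N) => S.card = n₁).card : ℝ)⁻¹ *
          ∑ S ∈ Finset.univ.filter fun S : Finset (Fin N) => S.card = n₁,
            (tauHat N n₁ y1 y0 S - (N : ℝ)⁻¹ * ∑ i, (y1 i - y0 i)) ^ 2
        = ((N.choose n₁ : ℝ))⁻¹ * ∑ S ∈ (univ : Finset (Fin N)).powersetCard n₁,
            (∑ i ∈ S, (y1 i / n₁ + y0 i / ((N:ℝ) - n₁))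
              - (n₁ : ℝ) / N * ∑ i, (y1 i / n₁ + y0 i / ((N:ℝ) - n₁))) ^ 2 := by
          rw [filterEq, card_powersetCard, card_univ, Fintype.card_fin]
          congr 1
          exact sum_congr rfl fun S _ => by
            rw [tauHat_bridge N n₁ h0 hN y1 y0 S]
      _ = (n₁ : ℝ) * ((N : ℝ) - n₁) / ((N : ℝ) * ((N : ℝ) - 1))
            * (∑ i, (y1 i / n₁ + y0 i / ((N:ℝ) - n₁))^2
               - (∑ i, (y1 i / n₁ + y0 i / ((N:ℝ) - n₁)))^2 / N) :=
          srs_var N n₁ h0 hN _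
      _ = popVar N y1 / n₁ + popVar N y0 / ((N - n₁ : ℕ) : ℝ) - popVar N (y1 - y0) / N :=
          rhs_algebra N n₁ h0 hN y1 y0
  have hpv : 0 ≤ popVar N (y1 - y0) :=
    mul_nonneg (inv_nonneg.2 (le_of_lt hNR1)) (sum_nonneg fun i _ => sq_nonneg _)
  refine ⟨hVar, ?_, ?_⟩
  · rw [hVar]
    exact sub_le_self _ (div_nonneg hpv (le_of_lt hNR))
  · rw [hVar, sub_eq_self]
    constructor
    · intro h
      have ht0 : popVar N (y1 - y0) = 0 := by
        rcases div_eq_zero_iff.1 h with h' | h'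
        · exact h'
        · exact absurd h' (ne_of_gt hNR)
      have hsum0 : ∑ i, ((y1 - y0) i - (N:ℝ)⁻¹ * ∑ j, (y1 - y0) j) ^ 2 = 0 := by
        rw [popVar] at ht0
        rcases mul_eq_zero.1 ht0 with h' | h'
        · exact absurd h' (inv_ne_zero (ne_of_gt hNR1))
        · exact h'
      have hzero := (sum_eq_zero_iff_of_nonneg (fun i _ => sq_nonneg _)).1 hsum0
      intro i j
      have hi := sub_eq_zero.1 (sq_eq_zero_iff.1 (hzero i (mem_univ i)))
      have hj := sub_eq_zero.1 (sq_eq_zero_iff.1 (hzero j (mem_univ j)))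
      have : (y1 - y0) i = (y1 - y0) j := by rw [hi, hj]
      simpa [Pi.sub_apply] using this
    · intro h
      have hconst : ∀ i : Fin N, (y1 - y0) i = (N:ℝ)⁻¹ * ∑ j, (y1 - y0) j := by
        intro i
        have hsum : ∑ j, (y1 - y0) j = (N:ℝ) * ((y1 - y0) i) := by
          calc ∑ j, (y1 - y0) j = ∑ _j : Fin N, (y1 - y0) i :=
                sum_congr rfl fun j _ => by
                  simpa [Pi.sub_apply] using (h j i)
            _ = (N:ℝ) * ((y1 - y0) i) := by
                rw [sum_const, card_univ, Fintype.card_fin, nsmul_eq_mul]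
        rw [hsum, ← mul_assoc, inv_mul_cancel₀ (ne_of_gt hNR), one_mul]
      have : popVar N (y1 - y0) = 0 := by
        rw [popVar]
        rw [sum_eq_zero fun i _ => by rw [show (y1 - y0) i - (N:ℝ)⁻¹ * ∑ j, (y1 - y0) j = 0
          from by rw [hconst i]; ring]; ring]
        ring
      rw [this, zero_div]
end
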